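/- The optimal value function u satisfies liminf_{t→∞} u(t)/√t ≥ √2. -/

import Mathlib

/-!
Comparison with a subsolution. For `β < √2` and `φ t = β (√t − √T)`, the map `J` is monotone in
the increments `f s − f t` on `[0, t]`, so at a first time `t ≥ T` where `u` touches `φ` from
above, `u' t = J u t ≥ J φ t`. Scaling shows `J φ t ≈ 1 / (β √t)` for large `t` (the integrand is
about `1 − β √t x / 2` near `x = 0`), which exceeds `φ' t = β / (2 √t)` exactly when `β² < 2`.
Hence `u` never drops below `φ`, and `u t / √t ≥ β − o(1)`.
-/

/-- The operator `J` from the paper: `(Jf)(t) = ∫₀¹ (f(t(1−x)) + 1 − f(t))⁺ dx`. -/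
noncomputable def Jop (f : ℝ → ℝ) (t : ℝ) : ℝ :=
  ∫ x in (0 : ℝ)..1, max (f (t * (1 - x)) + 1 - f t) 0

open Set Filter Topology

theorem nonneg_of_deriv_pos_at_first_zero {ψ ψ' : ℝ → ℝ} {a : ℝ}
    (hcont : ContinuousOn ψ (Ici a))
    (hderiv : ∀ t ≥ a, HasDerivWithinAt ψ (ψ' t) (Ici t) t) (ha : 0 ≤ ψ a)
    (hpos : ∀ t ≥ a, ψ t = 0 → (∀ s ∈ Icc a t, 0 ≤ ψ s) → 0 < ψ' t) :
    ∀ t ≥ a, 0 ≤ ψ t := by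
  intro t ht
  by_contra! htneg
  set S := {s | a ≤ s ∧ ψ s < 0}
  have hSne : S.Nonempty := ⟨t, ht, htneg⟩
  have hSbdd : BddBelow S := ⟨a, fun s hs => hs.1⟩
  set t₀ := sInf S
  have ht₀ : a ≤ t₀ := le_csInf hSne fun s hs => hs.1
  have ht₀S : t₀ ∈ closure S := csInf_mem_closure hSne hSbdd
  have hle : ψ t₀ ≤ 0 := by
    have hclosed : IsClosed (Ici a ∩ ψ ⁻¹' Iic 0) :=
      hcont.preimage_isClosed_of_isClosed isClosed_Ici isClosed_Iic
    have hS : S ⊆ Ici a ∩ ψ ⁻¹' Iic 0 := fun s hs => ⟨hs.1, hs.2.le⟩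
    exact (closure_minimal hS hclosed ht₀S).2
  have hbefore : ∀ s ∈ Icc a t₀, 0 ≤ ψ s := by
    rcases ht₀.eq_or_lt with h | h
    · rintro s ⟨hs₁, hs₂⟩
      rwa [le_antisymm (hs₂.trans h.ge) hs₁]
    · have hclosed : IsClosed (Ici a ∩ ψ ⁻¹' Ici 0) :=
        hcont.preimage_isClosed_of_isClosed isClosed_Ici isClosed_Ici
      have hIco : Ico a t₀ ⊆ Ici a ∩ ψ ⁻¹' Ici 0 := fun s hs =>
        ⟨hs.1, not_lt.1 fun hψ => (csInf_le hSbdd ⟨hs.1, hψ⟩).not_gt hs.2⟩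
      rw [← closure_Ico h.ne]
      exact fun s hs => (closure_minimal hIco hclosed hs).2
  have hzero : ψ t₀ = 0 := le_antisymm hle (hbefore t₀ ⟨ht₀, le_rfl⟩)
  -- `ψ` increases strictly right after `t₀`, yet `t₀` is approached from the right by `S`
  have hright : ∀ᶠ s in 𝓝[>] t₀, 0 < ψ s := by
    have hslope := (hasDerivWithinAt_iff_tendsto_slope' (lt_irrefl t₀)).1
      ((hderiv t₀ ht₀).mono Ioi_subset_Ici_self)
    filter_upwards [hslope.eventually_const_lt (hpos t₀ ht₀ hzero hbefore),
      self_mem_nhdsWithin] with s hs hst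
    rw [slope_def_field, hzero, sub_zero] at hs
    exact (div_pos_iff_of_pos_right (sub_pos.2 hst)).1 hs
  have hSright : S ⊆ Ioi t₀ := fun s hs =>
    (csInf_le hSbdd hs).lt_of_ne fun h => hs.2.ne (h ▸ hzero)
  have : (𝓝[S] t₀).NeBot := mem_closure_iff_nhdsWithin_neBot.1 ht₀S
  obtain ⟨s, hs, hsS⟩ :=
    ((hright.filter_mono (nhdsWithin_mono t₀ hSright)).and self_mem_nhdsWithin).exists
  exact hs.not_gt hsS.2

theorem Jop_nonneg (f : ℝ → ℝ) (t : ℝ) : 0 ≤ Jop f t :=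
  intervalIntegral.integral_nonneg zero_le_one fun _ _ => le_max_right _ _

theorem intervalIntegrable_Jop_integrand {f : ℝ → ℝ} {t : ℝ} (ht : 0 ≤ t)
    (hf : ContinuousOn f (Icc 0 t)) :
    IntervalIntegrable (fun x => max (f (t * (1 - x)) + 1 - f t) 0) MeasureTheory.volume 0 1 := by
  refine ContinuousOn.intervalIntegrable_of_Icc zero_le_one ?_
  have hmaps : MapsTo (fun x : ℝ => t * (1 - x)) (Icc 0 1) (Icc 0 t) := fun x hx =>
    ⟨mul_nonneg ht (by linarith [hx.2]), mul_le_of_le_one_right ht (by linarith [hx.1])⟩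
  exact (((hf.comp (by fun_prop) hmaps).add continuousOn_const).sub continuousOn_const).sup
    continuousOn_const

theorem Jop_mono_of_sub_le {f g : ℝ → ℝ} {t : ℝ} (ht : 0 ≤ t)
    (hf : ContinuousOn f (Icc 0 t)) (hg : ContinuousOn g (Icc 0 t))
    (hfg : ∀ s ∈ Icc 0 t, f s - f t ≤ g s - g t) : Jop f t ≤ Jop g t := by
  refine intervalIntegral.integral_mono_on zero_le_one (intervalIntegrable_Jop_integrand ht hf)
    (intervalIntegrable_Jop_integrand ht hg) fun x hx => ?_
  have := hfg (t * (1 - x))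
    ⟨mul_nonneg ht (by linarith [hx.2]), mul_le_of_le_one_right ht (by linarith [hx.1])⟩
  exact max_le_max_right 0 (by linarith)

theorem one_sub_sqrt_one_sub_le {x δ : ℝ} (hx : 0 ≤ x) (hxδ : x ≤ δ) (hδ : δ ≤ 1) :
    1 - √(1 - x) ≤ x / (2 - δ) := by
  set s := √(1 - x)
  have hs2 : s ^ 2 = 1 - x := Real.sq_sqrt (by linarith)
  have hs0 : 0 ≤ s := Real.sqrt_nonneg _
  have hs1 : s ≤ 1 := by nlinarith
  rw [le_div_iff₀ (by linarith)]
  -- `(1 - s) (1 + s) = x` and `1 + s ≥ 1 + s ^ 2 ≥ 2 - δ`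
  nlinarith [mul_nonneg (sub_nonneg.2 hs1) hs0]

theorem le_Jop_mul_sqrt_sub_const {k C t δ : ℝ} (ht : 0 < t) (hδ : 0 < δ) (hδ1 : δ ≤ 1)
    (hk : 2 / δ ≤ k * √t) : (1 - δ / 2) / (k * √t) ≤ Jop (fun s => k * √s - C) t := by
  set a := k * √t
  have ha : 0 < a := (div_pos two_pos hδ).trans_le hk
  have h2δ : 0 < 2 - δ := by linarith
  set m := a / (2 - δ)
  have hm : 0 < m := div_pos ha h2δ
  have hmδ : 1 / m ≤ δ := by
    rw [one_div_div, div_le_iff₀ ha]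
    nlinarith [(div_le_iff₀ hδ).1 hk]
  have hm1 : 1 / m ≤ 1 := hmδ.trans hδ1
  have hcont : Continuous fun x : ℝ => max (1 - a * (1 - √(1 - x))) 0 := by fun_prop
  have hJ : Jop (fun s => k * √s - C) t
      = ∫ x in (0 : ℝ)..1, max (1 - a * (1 - √(1 - x))) 0 := by
    refine intervalIntegral.integral_congr fun x hx => ?_
    simp only [Real.sqrt_mul ht.le, a]
    ring_nf
  have htriangle : ∫ x in (0 : ℝ)..1 / m, (1 - m * x) = (1 - δ / 2) / a := by
    rw [intervalIntegral.integral_sub intervalIntegrable_const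
      ((continuous_const_mul m).intervalIntegrable _ _),
      intervalIntegral.integral_const_mul, integral_id, intervalIntegral.integral_const,
      smul_eq_mul]
    simp only [m]
    field_simp
    ring
  rw [hJ, ← htriangle]
  calc ∫ x in (0 : ℝ)..1 / m, (1 - m * x)
      ≤ ∫ x in (0 : ℝ)..1 / m, max (1 - a * (1 - √(1 - x))) 0 := by
        refine intervalIntegral.integral_mono_on (by positivity)
          ((continuous_const.sub (continuous_const.mul continuous_id)).intervalIntegrable _ _)
          (hcont.intervalIntegrable _ _) fun x hx => le_max_of_le_left ?_
        have := one_sub_sqrt_one_sub_le hx.1 (hx.2.trans hmδ) hδ1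
        have : a * (1 - √(1 - x)) ≤ m * x := by
          calc a * (1 - √(1 - x)) ≤ a * (x / (2 - δ)) := by gcongr
            _ = m * x := by ring
        linarith
    _ ≤ ∫ x in (0 : ℝ)..1, max (1 - a * (1 - √(1 - x))) 0 :=
        intervalIntegral.integral_mono_interval le_rfl (by positivity) hm1
          (Eventually.of_forall fun _ => le_max_right _ _) (hcont.intervalIntegrable _ _)

theorem nonneg_of_hasDerivWithinAt_Ici_nonneg {u u' : ℝ → ℝ}
    (hderiv : ∀ t ∈ Ici (0 : ℝ), HasDerivWithinAt u (u' t) (Ici 0) t)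
    (hu' : ∀ t ∈ Ici (0 : ℝ), 0 ≤ u' t) (hu0 : u 0 = 0) {t : ℝ} (ht : 0 ≤ t) : 0 ≤ u t := by
  have hmono : MonotoneOn u (Ici 0) := by
    refine monotoneOn_of_hasDerivWithinAt_nonneg (f' := u') (convex_Ici 0)
      (fun t ht => (hderiv t ht).continuousWithinAt) (fun t ht => ?_) fun t ht => ?_
    all_goals rw [interior_Ici] at ht
    · exact ((hderiv t (mem_Ici.2 (le_of_lt ht))).hasDerivAt (Ici_mem_nhds ht)).hasDerivWithinAt
    · exact hu' t (mem_Ici.2 (le_of_lt ht))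
  simpa [hu0] using hmono self_mem_Ici ht ht

theorem mul_one_div_two_sqrt_lt_Jop_of_touch {u : ℝ → ℝ} {β C t : ℝ} (hβ0 : 0 < β)
    (hβ2 : β ^ 2 < 2) (ht : 0 < t) (hlarge : 2 / (β * (1 - β ^ 2 / 2)) ≤ √t)
    (hu : ContinuousOn u (Icc 0 t)) (hle : ∀ s ∈ Icc 0 t, β * √s - C ≤ u s)
    (htouch : u t = β * √t - C) : β * (1 / (2 * √t)) < Jop u t := by
  -- `δ` is chosen so that `β / 2 < (1 - δ / 2) / β`
  set δ := 1 - β ^ 2 / 2 with hδdef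
  have hδ : 0 < δ := by linarith
  have hδ1 : δ ≤ 1 := by linarith [sq_nonneg β]
  have hr : 0 < √t := Real.sqrt_pos.2 ht
  have hJ : Jop (fun s => β * √s - C) t ≤ Jop u t :=
    Jop_mono_of_sub_le ht.le (by fun_prop) hu fun s hs => by linarith [hle s hs]
  have hk : 2 / δ ≤ β * √t := by
    rw [div_le_iff₀ (by positivity)] at hlarge
    rw [div_le_iff₀ hδ]
    linarith
  have hgap : β * (1 / (2 * √t)) < (1 - δ / 2) / (β * √t) := by
    rw [mul_one_div, div_lt_div_iff₀ (by positivity) (by positivity)]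
    have : β * (β * √t) = β ^ 2 * √t := by ring
    nlinarith
  linarith [le_Jop_mul_sqrt_sub_const (C := C) ht hδ hδ1 hk]

theorem exists_mul_sqrt_sub_le_of_deriv_eq_Jop {u u' : ℝ → ℝ}
    (hderiv : ∀ t ∈ Ici (0 : ℝ), HasDerivWithinAt u (u' t) (Ici 0) t)
    (heq : ∀ t ∈ Ici (0 : ℝ), u' t = Jop u t) (hu0 : u 0 = 0) {β : ℝ} (hβ0 : 0 < β)
    (hβ : β < √2) : ∃ C, ∀ t ≥ 0, β * √t - C ≤ u t := by
  have hβ2 : β ^ 2 < 2 := (Real.lt_sqrt hβ0.le).1 hβ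
  have hucont : ContinuousOn u (Ici 0) := fun t ht => (hderiv t ht).continuousWithinAt
  have hunonneg : ∀ t ≥ 0, 0 ≤ u t := fun t =>
    nonneg_of_hasDerivWithinAt_Ici_nonneg hderiv (fun s hs => heq s hs ▸ Jop_nonneg u s) hu0
  set T := (2 / (β * (1 - β ^ 2 / 2))) ^ 2
  have hsqrtT : √T = 2 / (β * (1 - β ^ 2 / 2)) :=
    Real.sqrt_sq (div_nonneg zero_le_two (mul_nonneg hβ0.le (by linarith)))
  have hT : 0 < T := by rw [← Real.sqrt_pos, hsqrtT]; exact div_pos two_pos (by nlinarith)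
  set φ : ℝ → ℝ := fun s => β * √s - β * √T
  have hφcont : Continuous φ := by fun_prop
  have hbeforeT : ∀ s ∈ Icc 0 T, φ s ≤ u s := fun s hs => by
    have : √s ≤ √T := Real.sqrt_le_sqrt hs.2
    have : φ s ≤ 0 := by simp only [φ]; nlinarith
    linarith [hunonneg s hs.1]
  have hafterT : ∀ t ≥ T, 0 ≤ u t - φ t := by
    refine nonneg_of_deriv_pos_at_first_zero (ψ := fun s => u s - φ s)
      (ψ' := fun t => u' t - β * (1 / (2 * √t)))
      ((hucont.mono (Ici_subset_Ici.2 hT.le)).sub hφcont.continuousOn) (fun t ht => ?_)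
      (by simpa [φ] using hunonneg T hT.le) fun t ht hzero hhist => ?_
    · have ht0 : 0 < t := hT.trans_le ht
      refine ((hderiv t ht0.le).mono (Ici_subset_Ici.2 ht0.le)).sub ?_
      exact (((Real.hasDerivAt_sqrt ht0.ne').const_mul β).sub_const _).hasDerivWithinAt
    · have ht0 : 0 < t := hT.trans_le ht
      have hle : ∀ s ∈ Icc 0 t, φ s ≤ u s := fun s hs => by
        rcases le_total s T with hsT | hTs
        · exact hbeforeT s ⟨hs.1, hsT⟩
        · linarith [hhist s ⟨hTs, hs.2⟩]
      have := mul_one_div_two_sqrt_lt_Jop_of_touch hβ0 hβ2 ht0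
        (hsqrtT ▸ Real.sqrt_le_sqrt ht) (hucont.mono Icc_subset_Ici_self) hle
        (by linarith [hzero])
      linarith [heq t ht0.le]
  refine ⟨β * √T, fun t ht => ?_⟩
  rcases le_total t T with htT | hTt
  · exact hbeforeT t ⟨ht, htT⟩
  · linarith [hafterT t hTt]

theorem statement3_general (u u' : ℝ → ℝ)
    (hderiv : ∀ t ∈ Set.Ici (0 : ℝ), HasDerivWithinAt u (u' t) (Set.Ici (0 : ℝ)) t)
    (hu0 : u 0 = 0)
    (heq : ∀ t ∈ Set.Ici (0 : ℝ), u' t = Jop u t) :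
    ∀ ε > (0 : ℝ), ∀ᶠ t in Filter.atTop, Real.sqrt 2 - ε ≤ u t / Real.sqrt t := by
  intro ε hε
  set β := max (√2 - ε / 2) (√2 / 2)
  have hsqrt2 : 0 < √2 := by positivity
  have hβ0 : 0 < β := lt_max_of_lt_right (by positivity)
  have hβ : β < √2 := max_lt (by linarith) (by linarith)
  obtain ⟨C, hC⟩ := exists_mul_sqrt_sub_le_of_deriv_eq_Jop hderiv heq hu0 hβ0 hβ
  have hlim : Tendsto (fun t => β - C / √t) atTop (𝓝 β) := by
    simpa using tendsto_const_nhds.sub (tendsto_const_nhds.div_atTop Real.tendsto_sqrt_atTop)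
  have hεβ : √2 - ε < β := lt_max_of_lt_left (by linarith)
  filter_upwards [hlim.eventually_const_lt hεβ,
    eventually_gt_atTop 0] with t hlt ht
  have hr : 0 < √t := Real.sqrt_pos.2 ht
  rw [le_div_iff₀ hr]
  calc (√2 - ε) * √t ≤ (β - C / √t) * √t := by gcongr
    _ = β * √t - C := by field_simp
    _ ≤ u t := hC t ht.le

/-- The optimal value function `u` (the C¹ solution of `u′ = Ju`, `u(0) = 0`)
satisfies `liminf_{t→∞} u(t)/√t ≥ √2`, i.e. for every `ε > 0`, eventually
`u(t)/√t ≥ √2 − ε`. -/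
theorem statement3 (u u' : ℝ → ℝ)
    (hderiv : ∀ t ∈ Set.Ici (0 : ℝ), HasDerivWithinAt u (u' t) (Set.Ici (0 : ℝ)) t)
    (hcont : ContinuousOn u' (Set.Ici (0 : ℝ)))
    (hu0 : u 0 = 0)
    (heq : ∀ t ∈ Set.Ici (0 : ℝ), u' t = Jop u t) :
    ∀ ε > (0 : ℝ), ∀ᶠ t in Filter.atTop, Real.sqrt 2 - ε ≤ u t / Real.sqrt t :=
  statement3_general u u' hderiv hu0 heq
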